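/- arXiv:1703.05156 — 3 statements merged into one kernel-verified Lean document; each statement's English description precedes it below -/
import Mathlib

section
/- Let F be a family of graphs all on p vertices, let F ∈ F be a nonempty graph (having at least one edge) with the minimum number of edges among members of F, and let (H, E) be an instance with prescribed edge set E ⊆ binom(V(H),2). Construct H' from H by adding, for each prescribed edge e = u_e v_e ∈ E, a set X_e of p−2 new vertices and the new hyperedge S_e = X_e ∪ {u_e, v_e}. Then ov_F(H') = ov_F(H; E) + |E|·(|E(F)| − 1), where ov_F(H; E) is the minimum number of edges of a graph overlaying F on H that contains all edges of E. -/
/-!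
Upper bound: given `G ⊇ P` overlaying `F` on `H`, overlay each new hyperedge `S_e` by a copy of
`F₀` placed so that one of its edges is `u_e v_e`, which is already an edge of `G`; this costs
`|E(F₀)| - 1` new edges per prescribed edge.

Lower bound: given `G'` overlaying `F` on `H'`, take `G = G'[V(H)] ∪ P`. Every hyperedge `S_e`
carries at least `|E(F₀)|` edges of `G'`, and all of them except possibly `u_e v_e` meet `X_e`;
these are disjoint for distinct `e` and from `G'[V(H)]`. When `u_e v_e ∉ E(G')`, all
`|E(F₀)|` of them meet `X_e`, which pays for the edge `u_e v_e` added to `G`.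
-/

def Overlays (F : ∀ n, Set (SimpleGraph (Fin n))) {V : Type} [Fintype V] [DecidableEq V]
    (G : SimpleGraph V) (H : Finset (Finset V)) : Prop :=
  ∀ S ∈ H, ∃ A ∈ F S.card, ∃ e : Fin S.card ≃ {x // x ∈ S},
    ∀ a b, A.Adj a b → G.Adj (e a).1 (e b).1

noncomputable def ovNumber (F : ∀ n, Set (SimpleGraph (Fin n))) {V : Type} [Fintype V]
    [DecidableEq V] (H : Finset (Finset V)) : ℕ∞ :=
  sInf {k : ℕ∞ | ∃ G : SimpleGraph V, Overlays F G H ∧ (G.edgeSet.ncard : ℕ∞) = k}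

/-- Overlay number with a prescribed graph `P` whose edges must appear in the solution. -/
noncomputable def ovNumberPre (F : ∀ n, Set (SimpleGraph (Fin n))) {V : Type} [Fintype V]
    [DecidableEq V] (H : Finset (Finset V)) (P : SimpleGraph V) : ℕ∞ :=
  sInf {k : ℕ∞ | ∃ G : SimpleGraph V, Overlays F G H ∧ P ≤ G ∧ (G.edgeSet.ncard : ℕ∞) = k}

open Function

section SpanningCopy

variable {F : ∀ n, Set (SimpleGraph (Fin n))} {V W : Type}

def HasSpanningCopy (F : ∀ n, Set (SimpleGraph (Fin n))) (G : SimpleGraph V) (S : Finset V) :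
    Prop :=
  ∃ A ∈ F S.card, ∃ e : Fin S.card ≃ S, ∀ a b, A.Adj a b → G.Adj (e a) (e b)

theorem overlays_iff [Fintype V] [DecidableEq V] {G : SimpleGraph V} {H : Finset (Finset V)} :
    Overlays F G H ↔ ∀ S ∈ H, HasSpanningCopy F G S :=
  Iff.rfl

theorem ovNumber_le [Fintype V] [DecidableEq V] {G : SimpleGraph V} {H : Finset (Finset V)}
    (hG : Overlays F G H) : ovNumber F H ≤ G.edgeSet.ncard :=
  sInf_le ⟨G, hG, rfl⟩

theorem ovNumberPre_le [Fintype V] [DecidableEq V] {G P : SimpleGraph V} {H : Finset (Finset V)}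
    (hG : Overlays F G H) (hPG : P ≤ G) : ovNumberPre F H P ≤ G.edgeSet.ncard :=
  sInf_le ⟨G, hG, hPG, rfl⟩

theorem HasSpanningCopy.mono {G G' : SimpleGraph V} {S : Finset V} (hGG' : G ≤ G')
    (h : HasSpanningCopy F G S) : HasSpanningCopy F G' S :=
  let ⟨A, hA, e, he⟩ := h
  ⟨A, hA, e, fun a b hab => hGG' (he a b hab)⟩

theorem hasSpanningCopy_of_equiv {G : SimpleGraph V} {S : Finset V} {n : ℕ} (hn : S.card = n)
    {A : SimpleGraph (Fin n)} (hA : A ∈ F n) (e : Fin n ≃ S)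
    (he : ∀ a b, A.Adj a b → G.Adj (e a) (e b)) : HasSpanningCopy F G S := by
  subst hn
  exact ⟨A, hA, e, he⟩

theorem hasSpanningCopy_map_iff (f : V ↪ W) {G : SimpleGraph W} {S : Finset V} :
    HasSpanningCopy F G (S.map f) ↔ HasSpanningCopy F (G.comap f) S := by
  have hf : ∀ x, f ((S.equivMap f).symm x) = x := fun x =>
    congrArg Subtype.val ((S.equivMap f).apply_symm_apply x)
  constructor
  · rintro ⟨A, hA, e, he⟩
    refine hasSpanningCopy_of_equiv (S.card_map f).symm hA (e.trans (S.equivMap f).symm) ?_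
    intro a b hab
    simpa only [Equiv.trans_apply, SimpleGraph.comap_adj, hf] using he a b hab
  · rintro ⟨A, hA, e, he⟩
    exact hasSpanningCopy_of_equiv (S.card_map f) hA (e.trans (S.equivMap f)) he

theorem hasSpanningCopy_image_iff [DecidableEq W] {f : V → W} (hf : Injective f)
    {G : SimpleGraph W} {S : Finset V} :
    HasSpanningCopy F G (S.image f) ↔ HasSpanningCopy F (G.comap f) S := by
  have h := hasSpanningCopy_map_iff (F := F) (G := G) (S := S) ⟨f, hf⟩
  rwa [Finset.map_eq_image] at h

theorem HasSpanningCopy.le_ncard_edgeSet_inter_sym2 [Fintype V] {G : SimpleGraph V}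
    {S : Finset V} {c : ℕ} (h : HasSpanningCopy F G S)
    (hmin : ∀ A ∈ F S.card, c ≤ A.edgeSet.ncard) :
    c ≤ (G.edgeSet ∩ S.sym2).ncard := by
  obtain ⟨A, hA, e, he⟩ := h
  have hinj : Injective (Sym2.map fun a => (e a : V)) :=
    Sym2.map.injective (Subtype.val_injective.comp e.injective)
  calc c ≤ A.edgeSet.ncard := hmin A hA
    _ = (Sym2.map (fun a => (e a : V)) '' A.edgeSet).ncard :=
      (Set.ncard_image_of_injective _ hinj).symm
    _ ≤ (G.edgeSet ∩ S.sym2).ncard := by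
      refine Set.ncard_le_ncard ?_ (Set.toFinite _)
      rintro _ ⟨z, hz, rfl⟩
      induction z using Sym2.ind with
      | _ a b =>
        rw [Sym2.map_mk]
        exact ⟨he a b hz, Finset.mk_mem_sym2_iff.mpr ⟨(e a).2, (e b).2⟩⟩

end SpanningCopy

section Gadget

variable {V : Type} [Fintype V] [DecidableEq V] (P : SimpleGraph V) [DecidableRel P.Adj] (p : ℕ)

/-- The hyperedge `S_e = {u_e, v_e} ∪ X_e`; the new vertices `X_e` are the `Sum.inr (e, i)`. -/
def gadgetEdge (e : P.edgeFinset) : Finset (V ⊕ (P.edgeFinset × Fin (p - 2))) :=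
  ((Finset.univ.filter (fun x => x ∈ (e.1 : Sym2 V))).image Sum.inl) ∪
    (Finset.univ.image (fun i : Fin (p - 2) => Sum.inr (e, i)))

def gadgetHypergraph (H : Finset (Finset V)) :
    Finset (Finset (V ⊕ (P.edgeFinset × Fin (p - 2)))) :=
  H.image (Finset.image Sum.inl) ∪ P.edgeFinset.attach.image (gadgetEdge P p)

variable {P p}

@[simp]
theorem inl_mem_gadgetEdge {e : P.edgeFinset} {v : V} :
    Sum.inl v ∈ gadgetEdge P p e ↔ v ∈ (e : Sym2 V) := by
  simp [gadgetEdge]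

@[simp]
theorem inr_mem_gadgetEdge {e e' : P.edgeFinset} {i : Fin (p - 2)} :
    Sum.inr (e', i) ∈ gadgetEdge P p e ↔ e' = e := by
  simp [gadgetEdge, eq_comm]

theorem card_gadgetEdge (hp : 2 ≤ p) (e : P.edgeFinset) : (gadgetEdge P p e).card = p := by
  have hends : (Finset.univ.filter (fun x => x ∈ (e.1 : Sym2 V))).card = 2 := by
    rw [← Sym2.card_toFinset_of_not_isDiag _ (P.not_isDiag_of_mem_edgeFinset e.2)]
    congr 1
    ext
    simp
  rw [gadgetEdge, Finset.card_union_of_disjoint (by simp [Finset.disjoint_left]),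
    Finset.card_image_of_injective _ Sum.inl_injective, hends,
    Finset.card_image_of_injective _ (fun i j h => by simpa using h), Finset.card_fin]
  omega

theorem image_inl_mem_gadgetHypergraph {H : Finset (Finset V)} {S : Finset V} (hS : S ∈ H) :
    S.image Sum.inl ∈ gadgetHypergraph P p H :=
  Finset.mem_union_left _ (Finset.mem_image_of_mem _ hS)

theorem gadgetEdge_mem_gadgetHypergraph (H : Finset (Finset V)) (e : P.edgeFinset) :
    gadgetEdge P p e ∈ gadgetHypergraph P p H :=
  Finset.mem_union_right _ (Finset.mem_image_of_mem _ (Finset.mem_attach _ e))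

theorem map_inl_mem_sym2_gadgetEdge (e : P.edgeFinset) :
    Sym2.map Sum.inl (e : Sym2 V) ∈ (gadgetEdge P p e).sym2 := by
  simp [Finset.mem_sym2_iff]

theorem exists_inr_mem_of_mem_sym2_gadgetEdge {e : P.edgeFinset}
    {z : Sym2 (V ⊕ (P.edgeFinset × Fin (p - 2)))} (hz : z ∈ (gadgetEdge P p e).sym2)
    (hdiag : ¬ z.IsDiag) (hne : z ≠ Sym2.map Sum.inl (e : Sym2 V)) :
    ∃ i, Sum.inr (e, i) ∈ z := by
  induction z using Sym2.ind with
  | _ x y =>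
    rw [Finset.mk_mem_sym2_iff] at hz
    rcases x with u | ⟨e₁, i⟩
    · rcases y with v | ⟨e₂, j⟩
      · refine absurd ?_ hne
        have huv : u ≠ v := fun h => hdiag (by simp [h])
        have he : (e : Sym2 V) = s(u, v) := (Sym2.mem_and_mem_iff huv).mp (by simpa using hz)
        rw [he, Sym2.map_mk]
      · obtain rfl := inr_mem_gadgetEdge.mp hz.2
        exact ⟨j, Sym2.mem_mk_right _ _⟩
    · obtain rfl := inr_mem_gadgetEdge.mp hz.1
      exact ⟨i, Sym2.mem_mk_left _ _⟩

end Gadget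

theorem Equiv.exists_apply_eq_and_apply_eq {α β : Type*} [DecidableEq β] (σ : α ≃ β)
    {a b : α} {x y : β} (hab : a ≠ b) (hxy : x ≠ y) :
    ∃ τ : α ≃ β, τ a = x ∧ τ b = y := by
  set τ₁ := σ.trans (Equiv.swap (σ a) x)
  have h₁ : τ₁ a = x := by simp [τ₁]
  have hx : x ≠ τ₁ b := h₁ ▸ τ₁.injective.ne hab
  refine ⟨τ₁.trans (Equiv.swap (τ₁ b) y), ?_, by simp⟩
  rw [Equiv.trans_apply, h₁, Equiv.swap_apply_of_ne_of_ne hx hxy]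

theorem Fin.two_le_of_ne {n : ℕ} {a b : Fin n} (hab : a ≠ b) : 2 ≤ n := by
  have : 1 < n := by simpa using Fintype.one_lt_card_iff.mpr ⟨a, b, hab⟩
  omega

theorem SimpleGraph.ncard_edgeSet_eq_card_edgeFinset {V : Type*} (G : SimpleGraph V)
    [Fintype G.edgeSet] : G.edgeSet.ncard = G.edgeFinset.card :=
  Set.ncard_eq_toFinset_card' _

section UpperBound

variable {V : Type} [Fintype V] [DecidableEq V] {P : SimpleGraph V} [DecidableRel P.Adj] {p : ℕ}

theorem exists_equiv_gadgetEdge {a b : Fin p} (hab : a ≠ b) (e : P.edgeFinset) :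
    ∃ σ : Fin p ≃ gadgetEdge P p e,
      Sym2.map (fun c => (σ c : V ⊕ (P.edgeFinset × Fin (p - 2)))) s(a, b) =
        Sym2.map Sum.inl (e : Sym2 V) := by
  obtain ⟨z, hz⟩ := e
  induction z using Sym2.ind with
  | _ u v =>
    have huv : u ≠ v := P.ne_of_adj (by simpa using hz)
    let σ₀ : Fin p ≃ gadgetEdge P p ⟨s(u, v), hz⟩ :=
      (Finset.equivFinOfCardEq (card_gadgetEdge (Fin.two_le_of_ne hab) _)).symm
    obtain ⟨σ, ha, hb⟩ := σ₀.exists_apply_eq_and_apply_eq hab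
      (x := ⟨Sum.inl u, by simp⟩) (y := ⟨Sum.inl v, by simp⟩) (by simpa using huv)
    exact ⟨σ, by simp [ha, hb]⟩

def gadgetOverlay (G : SimpleGraph V) (F₀ : SimpleGraph (Fin p))
    (σ : ∀ e : P.edgeFinset, Fin p ≃ gadgetEdge P p e) :
    SimpleGraph (V ⊕ (P.edgeFinset × Fin (p - 2))) :=
  G.map Embedding.inl ⊔ ⨆ e, F₀.map ((σ e).toEmbedding.trans (Embedding.subtype _))

variable {G : SimpleGraph V} {F₀ : SimpleGraph (Fin p)}
  {σ : ∀ e : P.edgeFinset, Fin p ≃ gadgetEdge P p e}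

theorem overlays_gadgetOverlay {F : ∀ n, Set (SimpleGraph (Fin n))} {H : Finset (Finset V)}
    (hp : 2 ≤ p) (hF₀ : F₀ ∈ F p) (hG : Overlays F G H) :
    Overlays F (gadgetOverlay G F₀ σ) (gadgetHypergraph P p H) := by
  rw [overlays_iff]
  intro S hS
  simp only [gadgetHypergraph, Finset.mem_union, Finset.mem_image] at hS
  rcases hS with ⟨S, hS, rfl⟩ | ⟨e, -, rfl⟩
  · rw [hasSpanningCopy_image_iff Sum.inl_injective]
    exact (overlays_iff.mp hG S hS).mono ((SimpleGraph.map_le_iff_le_comap _ _ _).mp le_sup_left)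
  · refine hasSpanningCopy_of_equiv (card_gadgetEdge hp e) hF₀ (σ e) fun c d hcd => ?_
    exact le_sup_right (α := SimpleGraph _) (le_iSup (fun e => F₀.map _) e
      (SimpleGraph.map_adj_apply.mpr hcd))

/-- Each copy of `F₀` shares the edge `u_e v_e` with `G`. -/
theorem ncard_edgeSet_gadgetOverlay_le {a b : Fin p} (hab : F₀.Adj a b)
    (hσ : ∀ e, Sym2.map (fun c => (σ e c : V ⊕ (P.edgeFinset × Fin (p - 2)))) s(a, b) =
      Sym2.map Sum.inl (e : Sym2 V)) (hPG : P ≤ G) :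
    (gadgetOverlay G F₀ σ).edgeSet.ncard ≤
      G.edgeSet.ncard + P.edgeSet.ncard * (F₀.edgeSet.ncard - 1) := by
  let ψ (e : P.edgeFinset) := (σ e).toEmbedding.trans (Embedding.subtype _)
  let ι (e : P.edgeFinset) : Sym2 (V ⊕ (P.edgeFinset × Fin (p - 2))) := Sym2.map Sum.inl e
  have hι : ∀ e, ι e ∈ (ψ e).sym2Map '' F₀.edgeSet := fun e => ⟨s(a, b), hab, hσ e⟩
  have hsub : (gadgetOverlay G F₀ σ).edgeSet ⊆ Embedding.inl.sym2Map '' G.edgeSet ∪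
      ⋃ e, ((ψ e).sym2Map '' F₀.edgeSet \ {ι e}) := by
    simp only [gadgetOverlay, SimpleGraph.edgeSet_sup, SimpleGraph.edgeSet_iSup,
      SimpleGraph.edgeSet_map]
    rintro z (hz | hz)
    · exact Or.inl hz
    · obtain ⟨e, hz⟩ := Set.mem_iUnion.mp hz
      by_cases hze : z = ι e
      · exact Or.inl ⟨e, SimpleGraph.edgeSet_mono hPG (P.mem_edgeFinset.mp e.2), hze.symm⟩
      · exact Or.inr (Set.mem_iUnion.mpr ⟨e, hz, hze⟩)
  calc (gadgetOverlay G F₀ σ).edgeSet.ncard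
      ≤ (Embedding.inl.sym2Map '' G.edgeSet ∪
          ⋃ e, ((ψ e).sym2Map '' F₀.edgeSet \ {ι e})).ncard :=
        Set.ncard_le_ncard hsub (Set.toFinite _)
    _ ≤ G.edgeSet.ncard + ∑ e, ((ψ e).sym2Map '' F₀.edgeSet \ {ι e}).ncard :=
        (Set.ncard_union_le _ _).trans (add_le_add
          (Set.ncard_image_of_injective _ (Embedding.injective _)).le
          (Set.ncard_iUnion_le_of_fintype _))
    _ = G.edgeSet.ncard + P.edgeSet.ncard * (F₀.edgeSet.ncard - 1) := by
        simp only [Set.ncard_sdiff_singleton_of_mem (hι _),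
          Set.ncard_image_of_injective _ (Embedding.injective _), Finset.sum_const,
          Finset.card_univ, Fintype.card_coe, smul_eq_mul, P.ncard_edgeSet_eq_card_edgeFinset]

theorem exists_overlays_gadgetHypergraph_ncard_le {F : ∀ n, Set (SimpleGraph (Fin n))}
    (hF₀ : F₀ ∈ F p) (hF₀ne : F₀ ≠ ⊥) {H : Finset (Finset V)} (hG : Overlays F G H)
    (hPG : P ≤ G) :
    ∃ G' : SimpleGraph (V ⊕ (P.edgeFinset × Fin (p - 2))),
      Overlays F G' (gadgetHypergraph P p H) ∧
        G'.edgeSet.ncard ≤ G.edgeSet.ncard + P.edgeSet.ncard * (F₀.edgeSet.ncard - 1) := by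
  obtain ⟨a, b, hab⟩ := SimpleGraph.ne_bot_iff_exists_adj.mp hF₀ne
  choose σ hσ using exists_equiv_gadgetEdge (P := P) hab.ne
  exact ⟨gadgetOverlay G F₀ σ, overlays_gadgetOverlay (Fin.two_le_of_ne hab.ne) hF₀ hG,
    ncard_edgeSet_gadgetOverlay_le hab hσ hPG⟩

end UpperBound

theorem SimpleGraph.mem_edgeSet_comap {V W : Type*} {f : V → W} {G : SimpleGraph W}
    {z : Sym2 V} : z ∈ (G.comap f).edgeSet ↔ Sym2.map f z ∈ G.edgeSet := by
  induction z using Sym2.ind with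
  | _ u v => rfl

section LowerBound

variable {V : Type} [Fintype V] [DecidableEq V] {P : SimpleGraph V} [DecidableRel P.Adj] {p : ℕ}

def gadgetEdgeSet (G' : SimpleGraph (V ⊕ (P.edgeFinset × Fin (p - 2)))) (e : P.edgeFinset) :
    Set (Sym2 (V ⊕ (P.edgeFinset × Fin (p - 2)))) :=
  (G'.edgeSet ∩ (gadgetEdge P p e).sym2) \ {Sym2.map Sum.inl (e : Sym2 V)}

variable {G' : SimpleGraph (V ⊕ (P.edgeFinset × Fin (p - 2)))}

theorem exists_inr_mem_of_mem_gadgetEdgeSet {e : P.edgeFinset}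
    {z : Sym2 (V ⊕ (P.edgeFinset × Fin (p - 2)))} (hz : z ∈ gadgetEdgeSet G' e) :
    ∃ i, Sum.inr (e, i) ∈ z :=
  exists_inr_mem_of_mem_sym2_gadgetEdge hz.1.2 (G'.not_isDiag_of_mem_edgeSet hz.1.1) hz.2

theorem disjoint_range_map_inl_gadgetEdgeSet (e : P.edgeFinset) :
    Disjoint (Set.range (Sym2.map Sum.inl)) (gadgetEdgeSet G' e) := by
  rw [Set.disjoint_left]
  rintro _ ⟨w, rfl⟩ hw
  obtain ⟨i, hi⟩ := exists_inr_mem_of_mem_gadgetEdgeSet hw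
  obtain ⟨v, -, hv⟩ := Sym2.mem_map.mp hi
  exact Sum.inl_ne_inr hv

theorem pairwise_disjoint_gadgetEdgeSet : Pairwise (Disjoint on gadgetEdgeSet G') := by
  intro e e' hee'
  rw [onFun, Set.disjoint_left]
  intro z hz hz'
  obtain ⟨i, hi⟩ := exists_inr_mem_of_mem_gadgetEdgeSet hz
  exact hee' (inr_mem_gadgetEdge.mp (Finset.mem_sym2_iff.mp hz'.1.2 _ hi))

/-- `({e} \ (G'.comap Sum.inl).edgeSet).ncard` is `1` exactly when `u_e v_e ∉ E(G')`, and then the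
whole copy on `S_e` lies in `gadgetEdgeSet G' e`. -/
theorem le_ncard_gadgetEdgeSet {F : ∀ n, Set (SimpleGraph (Fin n))} {c : ℕ} (hp : 2 ≤ p)
    (hc : 1 ≤ c) (hmin : ∀ A ∈ F p, c ≤ A.edgeSet.ncard) {e : P.edgeFinset}
    (h : HasSpanningCopy F G' (gadgetEdge P p e)) :
    c - 1 + ({(e : Sym2 V)} \ (G'.comap Sum.inl).edgeSet).ncard ≤ (gadgetEdgeSet G' e).ncard := by
  have hcopy : c ≤ (G'.edgeSet ∩ (gadgetEdge P p e).sym2).ncard :=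
    h.le_ncard_edgeSet_inter_sym2 (by rwa [card_gadgetEdge hp])
  by_cases he : (e : Sym2 V) ∈ (G'.comap Sum.inl).edgeSet
  · have hmem : Sym2.map Sum.inl (e : Sym2 V) ∈ G'.edgeSet ∩ (gadgetEdge P p e).sym2 :=
      ⟨SimpleGraph.mem_edgeSet_comap.mp he, map_inl_mem_sym2_gadgetEdge e⟩
    rw [gadgetEdgeSet, Set.ncard_sdiff_singleton_of_mem hmem,
      Set.sdiff_eq_empty.mpr (Set.singleton_subset_iff.mpr he), Set.ncard_empty]
    omega
  · rw [gadgetEdgeSet, Set.sdiff_singleton_eq_self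
      fun h => he (SimpleGraph.mem_edgeSet_comap.mpr h.1),
      (Set.disjoint_singleton_left.mpr he).sdiff_eq_left, Set.ncard_singleton]
    omega

theorem overlays_comap_inl_sup {F : ∀ n, Set (SimpleGraph (Fin n))} {H : Finset (Finset V)}
    (hG' : Overlays F G' (gadgetHypergraph P p H)) : Overlays F (G'.comap Sum.inl ⊔ P) H :=
  fun _ hS => ((hasSpanningCopy_image_iff Sum.inl_injective).mp
    (hG' _ (image_inl_mem_gadgetHypergraph hS))).mono le_sup_left

theorem exists_overlays_ncard_le_of_overlays_gadgetHypergraph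
    {F : ∀ n, Set (SimpleGraph (Fin n))} {F₀ : SimpleGraph (Fin p)} (hF₀ne : F₀ ≠ ⊥)
    (hmin : ∀ A ∈ F p, F₀.edgeSet.ncard ≤ A.edgeSet.ncard) {H : Finset (Finset V)}
    (hG' : Overlays F G' (gadgetHypergraph P p H)) :
    ∃ G : SimpleGraph V, Overlays F G H ∧ P ≤ G ∧
      G.edgeSet.ncard + P.edgeSet.ncard * (F₀.edgeSet.ncard - 1) ≤ G'.edgeSet.ncard := by
  obtain ⟨a, b, hab⟩ := SimpleGraph.ne_bot_iff_exists_adj.mp hF₀ne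
  have hc : 1 ≤ F₀.edgeSet.ncard := (Set.ncard_pos (Set.toFinite _)).mpr ⟨s(a, b), hab⟩
  set K := G'.comap (Embedding.inl : V ↪ V ⊕ (P.edgeFinset × Fin (p - 2)))
  have hdisj : Disjoint (K.map Embedding.inl).edgeSet (⋃ e, gadgetEdgeSet G' e) := by
    refine Set.disjoint_iUnion_right.mpr fun e => ?_
    refine (disjoint_range_map_inl_gadgetEdgeSet e).mono_left ?_
    rw [SimpleGraph.edgeSet_map]
    exact Set.image_subset_range _ _
  have hcover : P.edgeSet \ K.edgeSet ⊆ ⋃ e : P.edgeFinset, {(e : Sym2 V)} \ K.edgeSet :=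
    fun z hz => Set.mem_iUnion.mpr ⟨⟨z, P.mem_edgeFinset.mpr hz.1⟩, rfl, hz.2⟩
  refine ⟨K ⊔ P, overlays_comap_inl_sup hG', le_sup_right, ?_⟩
  calc (K ⊔ P).edgeSet.ncard + P.edgeSet.ncard * (F₀.edgeSet.ncard - 1)
      ≤ K.edgeSet.ncard + ∑ e : P.edgeFinset,
          (F₀.edgeSet.ncard - 1 + ({(e : Sym2 V)} \ K.edgeSet).ncard) := by
        rw [SimpleGraph.edgeSet_sup, ← Set.union_sdiff_self, Finset.sum_add_distrib,
          Finset.sum_const, Finset.card_univ, Fintype.card_coe, smul_eq_mul,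
          P.ncard_edgeSet_eq_card_edgeFinset]
        have := (Set.ncard_union_le K.edgeSet (P.edgeSet \ K.edgeSet)).trans (Nat.add_le_add_left
          ((Set.ncard_le_ncard hcover (Set.toFinite _)).trans (Set.ncard_iUnion_le_of_fintype _)) _)
        omega
    _ ≤ K.edgeSet.ncard + ∑ e, (gadgetEdgeSet G' e).ncard := by
        gcongr with e
        exact le_ncard_gadgetEdgeSet (Fin.two_le_of_ne hab.ne) hc hmin
          (hG' _ (gadgetEdge_mem_gadgetHypergraph H e))
    _ = ((K.map Embedding.inl).edgeSet ∪ ⋃ e, gadgetEdgeSet G' e).ncard := by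
        rw [Set.ncard_union_eq hdisj, Set.ncard_iUnion_of_finite (fun _ => Set.toFinite _)
          pairwise_disjoint_gadgetEdgeSet, finsum_eq_sum_of_fintype, SimpleGraph.edgeSet_map,
          Set.ncard_image_of_injective _ (Embedding.injective _)]
    _ ≤ G'.edgeSet.ncard :=
        Set.ncard_le_ncard (Set.union_subset
          (SimpleGraph.edgeSet_mono (SimpleGraph.map_comap_le _ _))
          (Set.iUnion_subset fun e => Set.sdiff_subset.trans Set.inter_subset_left))

end LowerBound

theorem ovNumber_prescribed_reduction_general (p : ℕ) (F : ∀ n, Set (SimpleGraph (Fin n)))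
    (F₀ : SimpleGraph (Fin p)) (hF₀ : F₀ ∈ F p) (hF₀ne : F₀ ≠ ⊥)
    (hmin : ∀ A ∈ F p, F₀.edgeSet.ncard ≤ A.edgeSet.ncard)
    {V : Type} [Fintype V] [DecidableEq V] (H : Finset (Finset V))
    (P : SimpleGraph V) [DecidableRel P.Adj] :
    ovNumber F
      ((H.image (Finset.image (Sum.inl : V → V ⊕ (↥P.edgeFinset × Fin (p - 2))))) ∪
        P.edgeFinset.attach.image (fun e =>
          ((Finset.univ.filter (fun x => x ∈ (e.1 : Sym2 V))).image
              (Sum.inl : V → V ⊕ (↥P.edgeFinset × Fin (p - 2)))) ∪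
            (Finset.univ.image (fun i : Fin (p - 2) =>
              (Sum.inr (e, i) : V ⊕ (↥P.edgeFinset × Fin (p - 2)))))))
      = ovNumberPre F H P + (P.edgeSet.ncard * (F₀.edgeSet.ncard - 1) : ℕ) := by
  change ovNumber F (gadgetHypergraph P p H) = _
  apply le_antisymm
  · rw [ovNumberPre, ENat.sInf_add]
    refine le_iInf₂ ?_
    rintro _ ⟨G, hG, hPG, rfl⟩
    obtain ⟨G', hG', hcard⟩ := exists_overlays_gadgetHypergraph_ncard_le hF₀ hF₀ne hG hPG
    exact (ovNumber_le hG').trans (by exact_mod_cast hcard)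
  · refine le_sInf ?_
    rintro _ ⟨G', hG', rfl⟩
    obtain ⟨G, hG, hPG, hcard⟩ :=
      exists_overlays_ncard_le_of_overlays_gadgetHypergraph hF₀ne hmin hG'
    calc ovNumberPre F H P + (P.edgeSet.ncard * (F₀.edgeSet.ncard - 1) : ℕ)
        ≤ G.edgeSet.ncard + (P.edgeSet.ncard * (F₀.edgeSet.ncard - 1) : ℕ) :=
          add_le_add_left (ovNumberPre_le hG hPG) _
      _ ≤ G'.edgeSet.ncard := by exact_mod_cast hcard

/-- let `F` be a family of graphs all on `p` vertices, `F₀ ∈ F` nonempty with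
the minimum number of edges, and `P` a prescribed edge set on `V(H)`. Construct `H'` from `H`
by adding, for each prescribed edge `e = u_e v_e`, a set `X_e` of `p-2` new vertices and the
new hyperedge `S_e = X_e ∪ {u_e, v_e}`. Then
`ov_F(H') = ov_F(H; P) + |E(P)|·(|E(F₀)| − 1)`. -/
theorem ovNumber_prescribed_reduction (p : ℕ) (F : ∀ n, Set (SimpleGraph (Fin n)))
    (honly : ∀ n, n ≠ p → F n = ∅)
    (F₀ : SimpleGraph (Fin p)) (hF₀ : F₀ ∈ F p) (hF₀ne : F₀ ≠ ⊥)
    (hmin : ∀ A ∈ F p, F₀.edgeSet.ncard ≤ A.edgeSet.ncard)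
    {V : Type} [Fintype V] [DecidableEq V] (H : Finset (Finset V))
    (P : SimpleGraph V) [DecidableRel P.Adj]
    (hex : ∃ G : SimpleGraph V, Overlays F G H ∧ P ≤ G) :
    ovNumber F
      ((H.image (Finset.image (Sum.inl : V → V ⊕ (↥P.edgeFinset × Fin (p - 2))))) ∪
        P.edgeFinset.attach.image (fun e =>
          ((Finset.univ.filter (fun x => x ∈ (e.1 : Sym2 V))).image
              (Sum.inl : V → V ⊕ (↥P.edgeFinset × Fin (p - 2)))) ∪
            (Finset.univ.image (fun i : Fin (p - 2) =>
              (Sum.inr (e, i) : V ⊕ (↥P.edgeFinset × Fin (p - 2)))))))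
      = ovNumberPre F H P + (P.edgeSet.ncard * (F₀.edgeSet.ncard - 1) : ℕ) :=
  ovNumber_prescribed_reduction_general p F F₀ hF₀ hF₀ne hmin H P
end

section
/- Let F_p be a free set of graphs of order p (no member is a proper subgraph of another member). If some graph F ∈ F_p has both an isolated vertex and a vertex of degree 1, then F_p is hard: there exists a graph J of order p and two distinct non-edges e₁, e₂ of J such that no subgraph of J belongs to F_p, but both J ∪ e₁ and J ∪ e₂ contain a subgraph belonging to F_p. -/
/-- `A` is isomorphic to a subgraph of `B` (both on `p` vertices). -/
def SubIso {p : ℕ} (A B : SimpleGraph (Fin p)) : Prop :=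
  ∃ e : Fin p ≃ Fin p, A.map e.toEmbedding ≤ B

/-- A set of graphs of order `p` is free if no member is isomorphic to a subgraph
of another (distinct) member. -/
def Free {p : ℕ} (Fp : Set (SimpleGraph (Fin p))) : Prop :=
  ∀ A ∈ Fp, ∀ B ∈ Fp, A ≠ B → ¬ SubIso A B

/-- A set `Fp` of graphs of order `p` is hard: there are a graph `J` and two distinct
non-edges `e₁, e₂` of `J` such that no subgraph of `J` is isomorphic to a member of `Fp`,
while both `J + e₁` and `J + e₂` contain subgraphs isomorphic to members of `Fp`. -/
def Hard {p : ℕ} (Fp : Set (SimpleGraph (Fin p))) : Prop :=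
  ∃ J : SimpleGraph (Fin p), ∃ e₁ e₂ : Sym2 (Fin p),
    ¬ e₁.IsDiag ∧ ¬ e₂.IsDiag ∧ e₁ ∉ J.edgeSet ∧ e₂ ∉ J.edgeSet ∧ e₁ ≠ e₂ ∧
    (∀ A ∈ Fp, ¬ SubIso A J) ∧
    (∃ A ∈ Fp, SubIso A (J ⊔ SimpleGraph.fromEdgeSet {e₁})) ∧
    (∃ A ∈ Fp, SubIso A (J ⊔ SimpleGraph.fromEdgeSet {e₂}))

/-- The star on `p` vertices, centered at vertex `0`. -/
def starGraph (p : ℕ) : SimpleGraph (Fin p) :=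
  SimpleGraph.fromRel (fun u v => u.val = 0 ∧ v.val ≠ 0)

lemma edgeSet_map_aux {p : ℕ} (G : SimpleGraph (Fin p)) (f : Fin p ↪ Fin p) :
    (G.map f).edgeSet = Sym2.map f '' G.edgeSet := by
  ext e
  induction e using Sym2.ind with
  | _ a b =>
    simp only [SimpleGraph.mem_edgeSet, SimpleGraph.map_adj, Set.mem_image]
    constructor
    · rintro ⟨u, v, h, rfl, rfl⟩
      exact ⟨s(u, v), h, rfl⟩
    · rintro ⟨e', he', heq⟩
      induction e' using Sym2.ind with
      | _ u v =>
        rw [Sym2.map_pair_eq, Sym2.eq_iff] at heq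
        rcases heq with ⟨rfl, rfl⟩ | ⟨rfl, rfl⟩
        · exact ⟨u, v, he', rfl, rfl⟩
        · exact ⟨v, u, he'.symm, rfl, rfl⟩

/-- if a free set `Fp` of graphs of order `p` contains a graph with both an
isolated vertex and a vertex of degree 1, then `Fp` is hard. -/
theorem hard_of_isolated_and_pendant {p : ℕ} (Fp : Set (SimpleGraph (Fin p)))
    (hfree : Free Fp) (F : SimpleGraph (Fin p)) (hF : F ∈ Fp)
    (z : Fin p) (hz : ∀ w, ¬ F.Adj z w)
    (y : Fin p) (hy : ∃! w, F.Adj y w) :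
    Hard Fp := by
  classical
  obtain ⟨x, hyx, hux⟩ := hy
  have hxy : y ≠ x := F.ne_of_adj hyx
  have hyz : y ≠ z := fun h => hz x (h ▸ hyx)
  have hxz : x ≠ z := fun h => hz y ((h ▸ hyx).symm)
  set J := F.deleteEdges {s(y, x)} with hJ
  have hJle : J ≤ F := SimpleGraph.deleteEdges_le _
  refine ⟨J, s(y, x), s(z, x), ?_, ?_, ?_, ?_, ?_, ?_, ?_, ?_⟩
  · simpa using hxy
  · simpa using fun h => hxz h.symm
  · simp [hJ, SimpleGraph.edgeSet_deleteEdges]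
  · intro h
    rw [hJ, SimpleGraph.edgeSet_deleteEdges] at h
    exact hz x (h.1)
  · intro h
    rw [Sym2.eq_iff] at h
    rcases h with ⟨h, _⟩ | ⟨h, _⟩
    · exact hyz h
    · exact hxy h
  · rintro A hA ⟨e, hle⟩
    by_cases hAF : A = F
    · subst hAF
      have h1 : (A.map e.toEmbedding).edgeSet.ncard = A.edgeSet.ncard := by
        rw [edgeSet_map_aux]
        exact Set.ncard_image_of_injective _ (Sym2.map.injective e.injective)
      have h2 : (A.map e.toEmbedding).edgeSet.ncard ≤ J.edgeSet.ncard :=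
        Set.ncard_le_ncard (SimpleGraph.edgeSet_mono hle) (Set.toFinite _)
      have h3 : J.edgeSet.ncard < A.edgeSet.ncard := by
        apply Set.ncard_lt_ncard ?_ (Set.toFinite _)
        rw [hJ, SimpleGraph.edgeSet_deleteEdges]
        constructor
        · exact Set.diff_subset
        · intro hsub
          have : s(y, x) ∈ A.edgeSet \ {s(y, x)} := hsub hyx
          simp at this
      omega
    · exact hfree A hA F hF hAF ⟨e, hle.trans hJle⟩
  · refine ⟨F, hF, Equiv.refl _, ?_⟩
    intro a b hab
    rw [SimpleGraph.map_adj] at hab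
    obtain ⟨u, v, huv, rfl, rfl⟩ := hab
    simp only [Equiv.coe_refl, Equiv.toEmbedding_apply, id_eq]
    by_cases h : s(u, v) = s(y, x)
    · exact Or.inr (by simp [h, huv.ne])
    · refine Or.inl ?_
      rw [hJ, SimpleGraph.deleteEdges_adj]
      exact ⟨huv, by simpa using h⟩
  · refine ⟨F, hF, Equiv.swap y z, ?_⟩
    intro a b hab
    rw [SimpleGraph.map_adj] at hab
    obtain ⟨u, v, huv, rfl, rfl⟩ := hab
    simp only [Equiv.toEmbedding_apply]
    have huz : u ≠ z := fun h => hz v (h ▸ huv)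
    have hvz : v ≠ z := fun h => hz u ((h ▸ huv).symm)
    by_cases hu : u = y
    · have hv : v = x := hux v (hu ▸ huv)
      rw [hu, hv, Equiv.swap_apply_left, Equiv.swap_apply_of_ne_of_ne hxy.symm hxz]
      refine Or.inr ?_
      rw [SimpleGraph.fromEdgeSet_adj]
      exact ⟨rfl, fun h => hxz h.symm⟩
    · by_cases hv : v = y
      · have hu' : u = x := hux u (hv ▸ huv.symm)
        rw [hv, hu', Equiv.swap_apply_left, Equiv.swap_apply_of_ne_of_ne hxy.symm hxz]
        refine Or.inr ?_
        rw [SimpleGraph.fromEdgeSet_adj]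
        exact ⟨Sym2.eq_swap, hxz⟩
      · rw [Equiv.swap_apply_of_ne_of_ne hu huz, Equiv.swap_apply_of_ne_of_ne hv hvz]
        refine Or.inl ?_
        rw [hJ, SimpleGraph.deleteEdges_adj]
        refine ⟨huv, ?_⟩
        simp only [Set.mem_singleton_iff, Sym2.eq_iff]
        rintro (⟨rfl, rfl⟩ | ⟨rfl, rfl⟩)
        · exact hu rfl
        · exact hv rfl
end

section
/- Let p ≥ 3 and let F_p be a free set of graphs of order p that contains a subgraph of the star S_p different from the edgeless graph on p vertices. Then F_p is hard. -/
/-!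
Let `J` be a maximal graph on `Fin p` containing no copy of a member of `Fp`; it exists because
`⊥` is such a graph (`⊥ ∉ Fp`, since `⊥` is a proper subgraph of the non-edgeless member
`A ≤ S_p`). By maximality, adding any non-edge to `J` creates a copy of a member of `Fp`, so it
suffices that `J` has two non-edges. If it had at most one, then, as `p ≥ 3`, some vertex would
miss it and be adjacent to all others: `J` would contain a spanning star, hence a copy of `A`.
-/

lemma Sym2.exists_forall_notMem_of_subsingleton {V : Type*} (hV : 3 ≤ ENat.card V)
    {s : Set (Sym2 V)} (hs : s.Subsingleton) : ∃ c : V, ∀ e ∈ s, c ∉ e := by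
  rcases hs.eq_empty_or_singleton with rfl | ⟨e, rfl⟩
  · have : Nonempty V := (ENat.card_ne_zero_iff_nonempty V).1 (zero_lt_three.trans_le hV).ne'
    exact ⟨Classical.arbitrary V, by simp⟩
  · induction e using Sym2.ind with | h x y =>
    obtain ⟨c, hcx, hcy⟩ := ENat.exists_ne_ne_of_three_le hV x y
    exact ⟨c, by simp [hcx, hcy]⟩

namespace SimpleGraph

variable {V : Type*} {G : SimpleGraph V}

lemma mem_edgeSet_compl {e : Sym2 V} : e ∈ Gᶜ.edgeSet ↔ ¬ e.IsDiag ∧ e ∉ G.edgeSet := by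
  rw [← top_sdiff, edgeSet_sdiff, edgeSet_top]
  simp

lemma exists_forall_adj_of_subsingleton_edgeSet_compl (hV : 3 ≤ ENat.card V)
    (h : Gᶜ.edgeSet.Subsingleton) : ∃ c : V, ∀ w, w ≠ c → G.Adj c w := by
  obtain ⟨c, hc⟩ := Sym2.exists_forall_notMem_of_subsingleton hV h
  refine ⟨c, fun w hwc => ?_⟩
  by_contra hcw
  exact hc s(c, w) ((compl_adj G c w).2 ⟨hwc.symm, hcw⟩) (Sym2.mem_mk_left c w)

end SimpleGraph

section SubIso

open SimpleGraph

variable {p : ℕ}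

lemma SubIso.of_le {A B : SimpleGraph (Fin p)} (h : A ≤ B) : SubIso A B :=
  ⟨Equiv.refl _, (map_le_iff_le_comap _ _ _).2 h⟩

lemma SubIso.trans {A B C : SimpleGraph (Fin p)} (hAB : SubIso A B) (hBC : SubIso B C) :
    SubIso A C := by
  obtain ⟨σ, hσ⟩ := hAB
  obtain ⟨τ, hτ⟩ := hBC
  refine ⟨σ.trans τ, ?_⟩
  calc A.map (σ.trans τ).toEmbedding = (A.map σ.toEmbedding).map τ.toEmbedding := by
        rw [map_map]; rfl
    _ ≤ B.map τ.toEmbedding := map_monotone _ hσ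
    _ ≤ C := hτ

lemma eq_bot_of_subIso_bot {A : SimpleGraph (Fin p)} (h : SubIso A ⊥) : A = ⊥ := by
  obtain ⟨σ, hσ⟩ := h
  rw [map_le_iff_le_comap] at hσ
  exact le_bot_iff.1 (hσ.trans (by simp))

lemma subIso_starGraph_of_forall_adj {G : SimpleGraph (Fin p)} (c : Fin p)
    (hc : ∀ w, w ≠ c → G.Adj c w) : SubIso (starGraph p) G := by
  set τ := Equiv.swap ⟨0, c.pos⟩ c
  have hcenter : ∀ a b : Fin p, a.val = 0 → a ≠ b → G.Adj (τ a) (τ b) := by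
    intro a b ha hab
    obtain rfl : a = ⟨0, c.pos⟩ := Fin.ext ha
    rw [Equiv.swap_apply_left]
    exact hc _ fun hb => hab (τ.injective (hb.trans (Equiv.swap_apply_left _ _).symm)).symm
  refine ⟨τ, (map_le_iff_le_comap _ _ _).2 fun a b hab => ?_⟩
  obtain ⟨hne, ⟨ha, -⟩ | ⟨hb, -⟩⟩ := (fromRel_adj _ _ _).1 hab
  · exact hcenter a b ha hne
  · exact (hcenter b a hb hne.symm).symm

end SubIso

def FamilyFree {p : ℕ} (Fp : Set (SimpleGraph (Fin p))) (J : SimpleGraph (Fin p)) : Prop :=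
  ∀ A ∈ Fp, ¬ SubIso A J

section FamilyFree

variable {p : ℕ} {Fp : Set (SimpleGraph (Fin p))}

lemma familyFree_bot (hfree : Free Fp) {A : SimpleGraph (Fin p)} (hA : A ∈ Fp) (hAne : A ≠ ⊥) :
    FamilyFree Fp ⊥ := by
  intro B hB hBbot
  obtain rfl := eq_bot_of_subIso_bot hBbot
  exact hfree ⊥ hB A hA (Ne.symm hAne) (SubIso.of_le bot_le)

lemma Maximal.exists_subIso_sup_edge {J : SimpleGraph (Fin p)} (hJ : Maximal (FamilyFree Fp) J)
    {e : Sym2 (Fin p)} (he : e ∈ Jᶜ.edgeSet) :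
    ∃ A ∈ Fp, SubIso A (J ⊔ SimpleGraph.fromEdgeSet {e}) := by
  rw [SimpleGraph.mem_edgeSet_compl] at he
  by_contra! h
  have hle : J ⊔ SimpleGraph.fromEdgeSet {e} ≤ J := hJ.2 (fun A hA => h A hA) le_sup_left
  exact he.2 (SimpleGraph.edgeSet_mono hle (by simp [he.1]))

lemma hard_of_maximal_familyFree {J : SimpleGraph (Fin p)} (hJ : Maximal (FamilyFree Fp) J)
    (hJc : Jᶜ.edgeSet.Nontrivial) : Hard Fp := by
  obtain ⟨e₁, he₁, e₂, he₂, hne⟩ := hJc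
  have h₁ := SimpleGraph.mem_edgeSet_compl.1 he₁
  have h₂ := SimpleGraph.mem_edgeSet_compl.1 he₂
  exact ⟨J, e₁, e₂, h₁.1, h₂.1, h₁.2, h₂.2, hne, hJ.1,
    hJ.exists_subIso_sup_edge he₁, hJ.exists_subIso_sup_edge he₂⟩

end FamilyFree

/-- if `p ≥ 3` and a free set `Fp` of graphs of order `p` contains a
non-edgeless subgraph of the star `S_p`, then `Fp` is hard. -/
theorem hard_of_star_subgraph {p : ℕ} (hp : 3 ≤ p) (Fp : Set (SimpleGraph (Fin p)))
    (hfree : Free Fp)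
    (hstar : ∃ A ∈ Fp, A ≠ ⊥ ∧ SubIso A (starGraph p)) :
    Hard Fp := by
  obtain ⟨A, hA, hAne, hAstar⟩ := hstar
  obtain ⟨J, -, hJ⟩ := Finite.exists_le_maximal (familyFree_bot hfree hA hAne)
  refine hard_of_maximal_familyFree hJ (Set.not_subsingleton_iff.1 fun hJc => ?_)
  obtain ⟨c, hc⟩ := SimpleGraph.exists_forall_adj_of_subsingleton_edgeSet_compl (by simpa using hp) hJc
  exact hJ.1 A hA (hAstar.trans (subIso_starGraph_of_forall_adj c hc))
end
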